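/- arXiv:1005.4461 — 2 statements merged into one kernel-verified Lean document; each statement's English description precedes it below -/
import Mathlib

section
/- In the allowable multiplicity-type setting, assume the high-rate condition K/N ≥ 1/N + μ/(μ+1) (equivalently K − 1 ≥ Nμ/(μ+1)). If an error pattern x ∈ {0,1,…,ℓ}^N and an erasure pattern x̂ ∈ {1,…,T}^N with score S and cost C satisfy (μ+1)·(S − (μ/2)(K−1)) > C, then μ(K−1) < S ≤ (μ+1)(K−1), so the full ASD decoding condition is satisfied with a = μ. -/
open Finset

/-- The minimum of `f` over the finite set `s` of indices, with the convention that the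
minimum over the empty set is `0`. -/
def minOv (s : Finset ℕ) (f : ℕ → ℕ) : ℕ :=
  if h : s.Nonempty then s.inf' h f else 0

/-- The multiplicity type `(m 1, …, m ℓ)` is *allowable* for maximum multiplicity `μ`:
`∑_{j=1}^ℓ m j ≤ μ` and
`∑_{j=1}^ℓ m j (μ - m j) ≤ (μ+1) (#{j : m j ≠ 0} - 1) min_{j : m j ≠ 0} m j`. -/
def Allowable (ℓ μ : ℕ) (m : ℕ → ℕ) : Prop :=
  (∑ j ∈ Finset.Icc 1 ℓ, m j) ≤ μ ∧
    (∑ j ∈ Finset.Icc 1 ℓ, (m j : ℤ) * ((μ : ℤ) - (m j : ℤ)))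
      ≤ ((μ : ℤ) + 1) * ((((Finset.Icc 1 ℓ).filter fun j => m j ≠ 0).card : ℤ) - 1)
          * (minOv ((Finset.Icc 1 ℓ).filter fun j => m j ≠ 0) m : ℤ)

/-- The score `S = ∑_{i : x i ≥ 1} m (x i) (x̂ i)` of an error pattern `x` and an erasure
pattern `x̂` (positions indexed by `i ∈ {1,…,N}`). -/
def score (N : ℕ) (m : ℕ → ℕ → ℕ) (x xhat : ℕ → ℕ) : ℚ :=
  ∑ i ∈ Finset.Icc 1 N, if 1 ≤ x i then (m (x i) (xhat i) : ℚ) else 0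

/-- The cost `C = (1/2) ∑_{i=1}^N ∑_{j=1}^ℓ m j (x̂ i) (m j (x̂ i) + 1)`. -/
def cost (N ℓ : ℕ) (m : ℕ → ℕ → ℕ) (xhat : ℕ → ℕ) : ℚ :=
  (1 / 2) * ∑ i ∈ Finset.Icc 1 N, ∑ j ∈ Finset.Icc 1 ℓ,
    (m j (xhat i) : ℚ) * ((m j (xhat i) : ℚ) + 1)

/-- `ρ_{k,a} = μ(2a+1-μ)/(a(a+1)) + ∑_{j=1}^ℓ m_{j,k}(m_{j,k}+1)/(a(a+1))`. -/
def rho (μ ℓ : ℕ) (m : ℕ → ℕ → ℕ) (a k : ℕ) : ℚ :=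
  (μ : ℚ) * (2 * (a : ℚ) + 1 - (μ : ℚ)) / ((a : ℚ) * ((a : ℚ) + 1)) +
    ∑ j ∈ Finset.Icc 1 ℓ, (m j k : ℚ) * ((m j k : ℚ) + 1) / ((a : ℚ) * ((a : ℚ) + 1))

/-- The distortion measure `δ_a(0,k) = ρ_{k,a}` and `δ_a(j,k) = ρ_{k,a} - 2 m_{j,k}/a`
for `1 ≤ j ≤ ℓ`. -/
def deltaA (μ ℓ : ℕ) (m : ℕ → ℕ → ℕ) (a j k : ℕ) : ℚ :=
  if j = 0 then rho μ ℓ m a k else rho μ ℓ m a k - 2 * (m j k : ℚ) / (a : ℚ)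

/-- The distortion `d_a(x, x̂) = ∑_{i=1}^N δ_a(x i, x̂ i)`. -/
def distA (N μ ℓ : ℕ) (m : ℕ → ℕ → ℕ) (a : ℕ) (x xhat : ℕ → ℕ) : ℚ :=
  ∑ i ∈ Finset.Icc 1 N, deltaA μ ℓ m a (x i) (xhat i)


lemma key_allowable (ℓ μ : ℕ) (m : ℕ → ℕ) (h : Allowable ℓ μ m) (j0 : ℕ)
    (hj0 : j0 ∈ Finset.Icc 1 ℓ) :
    ((μ : ℤ) + 1) * (m j0 : ℤ) ≤ ∑ j ∈ Finset.Icc 1 ℓ, (m j : ℤ) * ((m j : ℤ) + 1) := by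
  have hpos : (0:ℤ) ≤ ∑ j ∈ Finset.Icc 1 ℓ, (m j : ℤ) * ((m j : ℤ) + 1) := by
    apply Finset.sum_nonneg; intro j _; positivity
  by_cases hz : m j0 = 0
  · simpa [hz] using hpos
  set s := (Finset.Icc 1 ℓ).filter fun j => m j ≠ 0 with hs
  have hj0s : j0 ∈ s := Finset.mem_filter.mpr ⟨hj0, hz⟩
  have hne : s.Nonempty := ⟨j0, hj0s⟩
  have hmn : minOv s m = s.inf' hne m := by simp [minOv, hne]
  set mn := minOv s m with hmndef
  have hmnle : ∀ j ∈ s, (mn : ℤ) ≤ (m j : ℤ) := by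
    intro j hj; exact_mod_cast by rw [hmn]; exact Finset.inf'_le m hj
  set A := ∑ j ∈ Finset.Icc 1 ℓ, (m j : ℤ) with hA
  set B := ∑ j ∈ Finset.Icc 1 ℓ, (m j : ℤ) * (m j : ℤ) with hB
  have h2 : (μ:ℤ) * A - B ≤ ((μ : ℤ) + 1) * ((s.card : ℤ) - 1) * (mn : ℤ) := by
    have := h.2
    calc (μ:ℤ) * A - B = ∑ j ∈ Finset.Icc 1 ℓ, (m j : ℤ) * ((μ : ℤ) - (m j : ℤ)) := by
          rw [hA, hB, Finset.mul_sum, ← Finset.sum_sub_distrib]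
          exact Finset.sum_congr rfl fun j _ => by ring
      _ ≤ _ := this
  have hAs : A = ∑ j ∈ s, (m j : ℤ) := by
    rw [hA, hs]
    rw [Finset.sum_filter]
    exact Finset.sum_congr rfl fun j _ => by by_cases hj : m j = 0 <;> simp [hj]
  have hcard : 1 ≤ s.card := Finset.card_pos.mpr hne
  have hAlb : (m j0 : ℤ) + ((s.card : ℤ) - 1) * (mn : ℤ) ≤ A := by
    rw [hAs, ← Finset.add_sum_erase s _ hj0s]
    have h1 : ((s.erase j0).card : ℤ) * (mn : ℤ) ≤ ∑ j ∈ s.erase j0, (m j : ℤ) := by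
      have := Finset.card_nsmul_le_sum (s.erase j0) (fun j => (m j : ℤ)) (mn : ℤ)
        (fun j hj => hmnle j (Finset.mem_of_mem_erase hj))
      simpa [nsmul_eq_mul] using this
    have hc : ((s.erase j0).card : ℤ) = (s.card : ℤ) - 1 := by
      rw [Finset.card_erase_of_mem hj0s]
      push_cast [Nat.cast_sub hcard]
      ring
    linarith [hc ▸ h1]
  have hmj0 : (mn : ℤ) ≤ (m j0 : ℤ) := hmnle j0 hj0s
  have hmnpos : (0:ℤ) ≤ (mn : ℤ) := Int.ofNat_nonneg _
  have hsum : ∑ j ∈ Finset.Icc 1 ℓ, (m j : ℤ) * ((m j : ℤ) + 1) = B + A := by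
    rw [hA, hB, ← Finset.sum_add_distrib]
    exact Finset.sum_congr rfl fun j _ => by ring
  rw [hsum]
  nlinarith [h2, hAlb]

/-- In the allowable multiplicity-type setting, assume the high-rate
condition `K/N ≥ 1/N + μ/(μ+1)`. If an error pattern `x ∈ {0,…,ℓ}^N` and an erasure
pattern `x̂ ∈ {1,…,T}^N` with score `S` and cost `C` satisfy
`(μ+1)(S - (μ/2)(K-1)) > C`, then `μ(K-1) < S ≤ (μ+1)(K-1)`, so the full ASD decoding
condition is satisfied with `a = μ`. -/
theorem stmt_8 (μ ℓ T N K : ℕ) (hμ : 1 ≤ μ) (hℓ : 1 ≤ ℓ) (hT : 1 ≤ T) (hN : 1 ≤ N)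
    (hK : 1 ≤ K) (m : ℕ → ℕ → ℕ)
    (hallow : ∀ k ∈ Finset.Icc 1 T, Allowable ℓ μ (fun j => m j k))
    (htype1 : ∀ j ∈ Finset.Icc 1 ℓ, m j 1 = if j = 1 then μ else 0)
    (hrate : 1 / (N : ℚ) + (μ : ℚ) / ((μ : ℚ) + 1) ≤ (K : ℚ) / (N : ℚ))
    (x : ℕ → ℕ) (hx : ∀ i ∈ Finset.Icc 1 N, x i ≤ ℓ)
    (xhat : ℕ → ℕ) (hxhat : ∀ i ∈ Finset.Icc 1 N, xhat i ∈ Finset.Icc 1 T)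
    (hcond : cost N ℓ m xhat
      < ((μ : ℚ) + 1) * (score N m x xhat - ((μ : ℚ) / 2) * ((K : ℚ) - 1))) :
    (μ : ℚ) * ((K : ℚ) - 1) < score N m x xhat ∧
      score N m x xhat ≤ ((μ : ℚ) + 1) * ((K : ℚ) - 1) := by
  have hN' : (0:ℚ) < N := by exact_mod_cast hN
  have hμ1 : (0:ℚ) < (μ:ℚ) + 1 := by positivity
  have hrate' : (N:ℚ) * μ ≤ ((μ:ℚ) + 1) * ((K:ℚ) - 1) := by
    rw [div_add_div _ _ (by positivity) (by positivity),
      div_le_div_iff₀ (by positivity) hN'] at hrate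
    nlinarith [hrate, hN']
  have hub : score N m x xhat ≤ (N:ℚ) * μ := by
    unfold score
    calc ∑ i ∈ Finset.Icc 1 N, (if 1 ≤ x i then (m (x i) (xhat i) : ℚ) else 0)
        ≤ ∑ i ∈ Finset.Icc 1 N, (μ:ℚ) := by
          apply Finset.sum_le_sum
          intro i hi
          by_cases h1 : 1 ≤ x i
          · simp only [h1, if_true]
            have hk := hxhat i hi
            have hle : m (x i) (xhat i) ≤ μ := by
              have := (hallow (xhat i) hk).1
              refine le_trans ?_ this
              exact Finset.single_le_sum (f := fun j => m j (xhat i))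
                (fun j _ => Nat.zero_le _) (Finset.mem_Icc.mpr ⟨h1, hx i hi⟩)
            exact_mod_cast hle
          · simp [h1]
      _ = (N:ℚ) * μ := by rw [Finset.sum_const, Nat.card_Icc]; simp [nsmul_eq_mul]
  have hlb : ((μ:ℚ) + 1) * score N m x xhat ≤ 2 * cost N ℓ m xhat := by
    unfold score cost
    rw [Finset.mul_sum]
    have h2 : 2 * ((1:ℚ) / 2 * ∑ i ∈ Finset.Icc 1 N, ∑ j ∈ Finset.Icc 1 ℓ,
        (m j (xhat i) : ℚ) * ((m j (xhat i) : ℚ) + 1))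
        = ∑ i ∈ Finset.Icc 1 N, ∑ j ∈ Finset.Icc 1 ℓ,
        (m j (xhat i) : ℚ) * ((m j (xhat i) : ℚ) + 1) := by ring
    rw [h2]
    apply Finset.sum_le_sum
    intro i hi
    by_cases h1 : 1 ≤ x i
    · simp only [h1, if_true]
      have hk := hxhat i hi
      have hz := key_allowable ℓ μ (fun j => m j (xhat i)) (hallow (xhat i) hk) (x i)
        (Finset.mem_Icc.mpr ⟨h1, hx i hi⟩)
      have h' := (@Int.cast_le ℚ _ _ _).mpr hz
      push_cast at h'
      exact h'
    · simp only [h1, if_false, mul_zero]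
      apply Finset.sum_nonneg
      intro j _; positivity
  constructor
  · nlinarith [hcond, hlb, hμ1]
  · linarith [hub, hrate']
end

section
/- In the allowable multiplicity-type setting, for every integer a ≥ 1, every k ∈ {1,…,T}, and every j ∈ {0,1,…,ℓ}, the scaled distortion entries satisfy ((a+1)/a)·δ_{a+1}(j,k) ≥ δ_a(j,k); that is, ((a+1)/a)·ρ_{k,a+1} ≥ ρ_{k,a} and ((a+1)/a)·(ρ_{k,a+1} − 2m_{j,k}/(a+1)) ≥ ρ_{k,a} − 2m_{j,k}/a for j ≥ 1. -/
/-!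
With `S = ∑ m_{j,k} (m_{j,k} + 1)` we have `ρ_{k,a} = (μ (2a + 1 - μ) + S) / (a (a + 1))`, and
after clearing denominators `ρ_{k,a} ≤ ((a + 1)/a) ρ_{k,a+1}` becomes `S ≤ μ (μ + 1)`, which holds
because `∑ m_{j,k} ≤ μ`. The terms `2 m_{j,k}/a` and `2 m_{j,k}/(a + 1)` correspond exactly under
the scaling by `(a + 1)/a`.
-/

open Finset

theorem Finset.sum_mul_succ_le_of_sum_le {ι : Type*} (s : Finset ι) (f : ι → ℕ) {μ : ℕ}
    (hsum : ∑ i ∈ s, f i ≤ μ) : ∑ i ∈ s, f i * (f i + 1) ≤ μ * (μ + 1) :=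
  calc ∑ i ∈ s, f i * (f i + 1)
      ≤ ∑ i ∈ s, f i * (μ + 1) := by
        gcongr with i hi
        exact (Finset.single_le_sum (fun _ _ => Nat.zero_le _) hi).trans hsum
    _ = (∑ i ∈ s, f i) * (μ + 1) := (Finset.sum_mul ..).symm
    _ ≤ μ * (μ + 1) := by gcongr

theorem rho_eq_div (μ ℓ : ℕ) (m : ℕ → ℕ → ℕ) (a k : ℕ) :
    rho μ ℓ m a k = ((μ : ℚ) * (2 * a + 1 - μ) + ∑ j ∈ Icc 1 ℓ, (m j k : ℚ) * (m j k + 1)) /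
      (a * (a + 1)) := by
  rw [rho, ← Finset.sum_div, add_div]

theorem div_le_succ_div_mul_div_succ {x M S : ℚ} (hx : 0 < x) (hS : S ≤ M * (M + 1)) :
    (M * (2 * x + 1 - M) + S) / (x * (x + 1)) ≤
      (x + 1) / x * ((M * (2 * (x + 1) + 1 - M) + S) / ((x + 1) * (x + 1 + 1))) := by
  rw [div_mul_div_comm, div_le_div_iff₀ (by positivity) (by positivity)]
  nlinarith [mul_pos hx (by positivity : (0 : ℚ) < x + 1)]

theorem rho_le_mul_rho_succ {μ ℓ : ℕ} {m : ℕ → ℕ → ℕ} {a k : ℕ} (ha : 1 ≤ a)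
    (hsum : ∑ j ∈ Icc 1 ℓ, m j k ≤ μ) :
    rho μ ℓ m a k ≤ ((a + 1 : ℚ) / a) * rho μ ℓ m (a + 1) k := by
  have hS : ∑ j ∈ Icc 1 ℓ, (m j k : ℚ) * (m j k + 1) ≤ μ * (μ + 1) := by
    exact_mod_cast Finset.sum_mul_succ_le_of_sum_le _ (m · k) hsum
  rw [rho_eq_div, rho_eq_div]
  push_cast
  exact div_le_succ_div_mul_div_succ (by exact_mod_cast ha) hS

theorem deltaA_le_mul_deltaA_succ {μ ℓ : ℕ} {m : ℕ → ℕ → ℕ} {a k : ℕ} (ha : 1 ≤ a)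
    (hsum : ∑ j ∈ Icc 1 ℓ, m j k ≤ μ) (j : ℕ) :
    deltaA μ ℓ m a j k ≤ ((a + 1 : ℚ) / a) * deltaA μ ℓ m (a + 1) j k := by
  have hrho := rho_le_mul_rho_succ ha hsum
  unfold deltaA
  split_ifs
  · exact hrho
  · have hscale : ((a + 1 : ℚ) / a) * (2 * m j k / ((a + 1 : ℕ) : ℚ)) = 2 * m j k / a := by
      push_cast
      field_simp
    rw [mul_sub, hscale]
    linarith

theorem stmt_11_general (μ ℓ T : ℕ)
    (m : ℕ → ℕ → ℕ)
    (hallow : ∀ k ∈ Finset.Icc 1 T, Allowable ℓ μ (fun j => m j k))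
    (a : ℕ) (ha : 1 ≤ a) :
    ∀ k ∈ Finset.Icc 1 T, ∀ j ≤ ℓ,
      deltaA μ ℓ m a j k ≤ (((a : ℚ) + 1) / (a : ℚ)) * deltaA μ ℓ m (a + 1) j k :=
  fun k hk j _ => deltaA_le_mul_deltaA_succ ha (hallow k hk).1 j

/-- In the allowable multiplicity-type setting, for every integer
`a ≥ 1`, every `k ∈ {1,…,T}`, and every `j ∈ {0,1,…,ℓ}`, the scaled distortion
entries satisfy `((a+1)/a) δ_{a+1}(j,k) ≥ δ_a(j,k)`; in particular
`((a+1)/a) ρ_{k,a+1} ≥ ρ_{k,a}` (the case `j = 0`) and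
`((a+1)/a) (ρ_{k,a+1} - 2 m_{j,k}/(a+1)) ≥ ρ_{k,a} - 2 m_{j,k}/a` for `j ≥ 1`. -/
theorem stmt_11 (μ ℓ T : ℕ) (hμ : 1 ≤ μ) (hℓ : 1 ≤ ℓ) (hT : 1 ≤ T)
    (m : ℕ → ℕ → ℕ)
    (hallow : ∀ k ∈ Finset.Icc 1 T, Allowable ℓ μ (fun j => m j k))
    (htype1 : ∀ j ∈ Finset.Icc 1 ℓ, m j 1 = if j = 1 then μ else 0)
    (a : ℕ) (ha : 1 ≤ a) :
    ∀ k ∈ Finset.Icc 1 T, ∀ j ≤ ℓ,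
      deltaA μ ℓ m a j k ≤ (((a : ℚ) + 1) / (a : ℚ)) * deltaA μ ℓ m (a + 1) j k :=
  stmt_11_general μ ℓ T m hallow a ha
end
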